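/- arXiv:2009.02257 — 4 statements merged into one kernel-verified Lean document; each statement's English description precedes it below -/
import Mathlib

section
/- Suppose n has bounded gaps. A semi-normalized Markushevich basis B is n-greedy if and only if B is n-suppression unconditional and n-democratic. -/
/-! Testing the greedy inequality on explicit vectors gives the two properties: raising the
coefficients of `x` on `A` to a common value above all the others makes `A` greedy without
changing `x - P_A x`, and for disjoint `A`, `B` the set `B` is greedy for `1_A + 1_B`, with
`1_A` an admissible competitor; a fresh set of cardinality `|B|` links arbitrary `A` and `B`.

Conversely, `𝐧`-suppression unconditionality extends to all finite sets by padding with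
indices outside the finite support of vectors of the dense span, and `𝐧`-democracy extends
to all cardinalities because, by the bounded gaps, a set is a union of at most `l` sets of
cardinality at most the preceding term of `𝐧`. The Konyagin–Temlyakov argument then shows
that an unconditional democratic basis is greedy. -/

open Finset

variable {X : Type*} [NormedAddCommGroup X] [NormedSpace ℝ X]

/-- `𝐧`-greediness with constant `C`: for every greedy set `A` of cardinality in `𝐧`,
the greedy sum is a `C`-quasi-optimal `|A|`-term approximation. -/
def NGreedy (e : ℕ → X) (f : ℕ → X →L[ℝ] ℝ) (nseq : ℕ → ℕ) (C : ℝ) : Prop :=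
  ∀ (x : X) (A : Finset ℕ),
    (∃ k, A.card = nseq k) →
    (∀ i ∈ A, ∀ j ∉ A, |f j x| ≤ |f i x|) →
    ∀ (y : X) (F : Finset ℕ), F.card ≤ A.card → (∀ i ∉ F, f i y = 0) →
      ‖x - ∑ i ∈ A, f i x • e i‖ ≤ C * ‖x - y‖

/-- `𝐧`-suppression unconditionality with constant `C`. -/
def NSuppUnc (e : ℕ → X) (f : ℕ → X →L[ℝ] ℝ) (nseq : ℕ → ℕ) (C : ℝ) : Prop :=
  ∀ (x : X) (A : Finset ℕ), (∃ k, A.card = nseq k) →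
    ‖∑ i ∈ A, f i x • e i‖ ≤ C * ‖x‖

/-- `𝐧`-democracy with constant `C`. -/
def NDem (e : ℕ → X) (nseq : ℕ → ℕ) (C : ℝ) : Prop :=
  ∀ (A B : Finset ℕ), A.card ≤ B.card →
    (∃ k, A.card = nseq k) → (∃ k, B.card = nseq k) →
    ‖∑ i ∈ A, e i‖ ≤ C * ‖∑ i ∈ B, e i‖

section Coefficients

variable {e : ℕ → X} {f : ℕ → X →L[ℝ] ℝ}

lemma coeff_sum_smul (hbi : ∀ i j, f i (e j) = if i = j then (1 : ℝ) else 0)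
    (S : Finset ℕ) (c : ℕ → ℝ) (i : ℕ) :
    f i (∑ j ∈ S, c j • e j) = if i ∈ S then c i else 0 := by
  simp only [map_sum, map_smul, hbi, smul_eq_mul, mul_ite, mul_one, mul_zero]
  exact sum_ite_eq S i c

lemma coeff_sum (hbi : ∀ i j, f i (e j) = if i = j then (1 : ℝ) else 0)
    (S : Finset ℕ) (i : ℕ) : f i (∑ j ∈ S, e j) = if i ∈ S then 1 else 0 := by
  simpa using coeff_sum_smul hbi S (fun _ => 1) i

lemma sum_coeff_sum_of_subset (hbi : ∀ i j, f i (e j) = if i = j then (1 : ℝ) else 0)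
    {T S : Finset ℕ} (hTS : T ⊆ S) : ∑ i ∈ T, f i (∑ j ∈ S, e j) • e i = ∑ i ∈ T, e i :=
  sum_congr rfl fun i hi => by rw [coeff_sum hbi, if_pos (hTS hi), one_smul]

lemma sum_coeff_smul_eq_self (hbi : ∀ i j, f i (e j) = if i = j then (1 : ℝ) else 0)
    (htotal : ∀ x : X, (∀ i, f i x = 0) → x = 0)
    {y : X} {S : Finset ℕ} (hy : ∀ i ∉ S, f i y = 0) : ∑ i ∈ S, f i y • e i = y := by
  refine (sub_eq_zero.1 <| htotal _ fun i => ?_).symm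
  rw [map_sub, coeff_sum_smul hbi]
  split_ifs with hi
  · exact sub_self _
  · rw [hy i hi, sub_zero]

lemma one_le_norm_coeff_mul_norm_sum (hbi : ∀ i j, f i (e j) = if i = j then (1 : ℝ) else 0)
    {S : Finset ℕ} {i : ℕ} (hi : i ∈ S) : 1 ≤ ‖f i‖ * ‖∑ j ∈ S, e j‖ := by
  simpa [coeff_sum hbi, hi] using (f i).le_opNorm (∑ j ∈ S, e j)

end Coefficients

lemma Finset.exists_disjoint_card_eq {α : Type*} [Infinite α] [DecidableEq α]
    (s : Finset α) (n : ℕ) : ∃ t, Disjoint s t ∧ t.card = n := by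
  obtain ⟨u, hsu, hu⟩ := Infinite.exists_superset_card_eq s (s.card + n) (by omega)
  exact ⟨u \ s, disjoint_sdiff, by rw [card_sdiff_of_subset hsu, hu]; omega⟩

lemma StrictMono.exists_apply_le_lt_apply_succ {u : ℕ → ℕ} (hu : StrictMono u) {n : ℕ}
    (hn : u 0 ≤ n) : ∃ m, u m ≤ n ∧ n < u (m + 1) := by
  classical
  have hex : ∃ m, n < u m := ⟨n + 1, (Nat.lt_succ_self n).trans_le hu.le_apply⟩
  obtain ⟨m, hm⟩ : ∃ m, Nat.find hex = m + 1 :=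
    Nat.exists_eq_succ_of_ne_zero fun h => by have := Nat.find_spec hex; rw [h] at this; omega
  exact ⟨m, not_lt.1 (Nat.find_min hex (by omega)), hm ▸ Nat.find_spec hex⟩

section Convexity

variable {E ι : Type*} [SeminormedAddCommGroup E] [NormedSpace ℝ E] (v : ι → E) {M : ℝ}
  {B : Finset ι}

/-- Peeling off the smallest coefficient writes `∑ a i • v i` as a combination of subset sums
with total weight `t`. -/
lemma norm_sum_smul_le_of_mem_Icc (hM : ∀ T ⊆ B, ‖∑ i ∈ T, v i‖ ≤ M) {a : ι → ℝ} {t : ℝ}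
    (ht : 0 ≤ t) (ha : ∀ i ∈ B, a i ∈ Set.Icc 0 t) : ‖∑ i ∈ B, a i • v i‖ ≤ t * M := by
  classical
  induction B using Finset.strongInduction generalizing a t with
  | _ B ih =>
  rcases B.eq_empty_or_nonempty with rfl | hB
  · simpa using mul_nonneg ht ((norm_nonneg (∑ i ∈ ∅, v i)).trans (hM ∅ (empty_subset _)))
  obtain ⟨i₀, hi₀, hmin⟩ := B.exists_min_image a hB
  have hsplit : ∑ i ∈ B, a i • v i
      = a i₀ • ∑ i ∈ B, v i + ∑ i ∈ B.erase i₀, (a i - a i₀) • v i := by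
    rw [sum_erase _ (by simp), smul_sum, ← sum_add_distrib]
    exact sum_congr rfl fun i _ => by rw [sub_smul]; abel
  have hrest := ih (B.erase i₀) (erase_ssubset hi₀)
    (fun T hT => hM T (hT.trans (erase_subset _ _))) (sub_nonneg.2 (ha i₀ hi₀).2)
    fun i hi => ⟨sub_nonneg.2 (hmin i (mem_of_mem_erase hi)),
      sub_le_sub (ha i (mem_of_mem_erase hi)).2 le_rfl⟩
  calc ‖∑ i ∈ B, a i • v i‖
      ≤ ‖a i₀ • ∑ i ∈ B, v i‖ + ‖∑ i ∈ B.erase i₀, (a i - a i₀) • v i‖ :=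
        hsplit ▸ norm_add_le _ _
    _ = a i₀ * ‖∑ i ∈ B, v i‖ + ‖∑ i ∈ B.erase i₀, (a i - a i₀) • v i‖ := by
        rw [norm_smul, Real.norm_of_nonneg (ha i₀ hi₀).1]
    _ ≤ a i₀ * M + (t - a i₀) * M := by gcongr; exacts [(ha i₀ hi₀).1, hM B subset_rfl]
    _ = t * M := by ring

lemma norm_sum_smul_le_of_abs_le (hM : ∀ T ⊆ B, ‖∑ i ∈ T, v i‖ ≤ M) {a : ι → ℝ} {t : ℝ}
    (ht : 0 ≤ t) (ha : ∀ i ∈ B, |a i| ≤ t) : ‖∑ i ∈ B, a i • v i‖ ≤ 2 * t * M := by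
  classical
  have hpos := norm_sum_smul_le_of_mem_Icc v
    (fun T hT => hM T (hT.trans (filter_subset (fun i => 0 ≤ a i) B))) ht
    fun i hi => ⟨(mem_filter.1 hi).2, (abs_le.1 (ha i (mem_filter.1 hi).1)).2⟩
  have hneg := norm_sum_smul_le_of_mem_Icc v (a := fun i => -a i)
    (fun T hT => hM T (hT.trans (filter_subset (fun i => ¬0 ≤ a i) B))) ht
    fun i hi => ⟨by linarith [not_le.1 (mem_filter.1 hi).2],
      by linarith [(abs_le.1 (ha i (mem_filter.1 hi).1)).1]⟩
  simp only [neg_smul, sum_neg_distrib, norm_neg] at hneg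
  calc ‖∑ i ∈ B, a i • v i‖
      ≤ ‖∑ i ∈ B with 0 ≤ a i, a i • v i‖ + ‖∑ i ∈ B with ¬0 ≤ a i, a i • v i‖ := by
        rw [← sum_filter_add_sum_filter_not B (fun i => 0 ≤ a i)]
        exact norm_add_le _ _
    _ ≤ 2 * t * M := by linarith

end Convexity

lemma norm_sum_le_mul_of_card_le_mul {E ι : Type*} [SeminormedAddCommGroup E] [DecidableEq ι]
    (v : ι → E) {n : ℕ} {M : ℝ}
    (hM : ∀ s : Finset ι, s.card ≤ n → ‖∑ i ∈ s, v i‖ ≤ M) (j : ℕ) {s : Finset ι}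
    (hs : s.card ≤ j * n) : ‖∑ i ∈ s, v i‖ ≤ j * M := by
  induction j generalizing s with
  | zero => simp [card_eq_zero.1 (Nat.le_zero.1 (by simpa using hs))]
  | succ j ih =>
    obtain ⟨t, hts, ht⟩ := exists_subset_card_eq (min_le_right n s.card)
    have hrest : (s \ t).card ≤ j * n := by
      rw [card_sdiff_of_subset hts, ht]
      rw [Nat.succ_mul] at hs
      omega
    calc ‖∑ i ∈ s, v i‖ = ‖∑ i ∈ s \ t, v i + ∑ i ∈ t, v i‖ := by rw [sum_sdiff hts]
      _ ≤ j * M + M := (norm_add_le _ _).trans (add_le_add (ih hrest) (hM t (by omega)))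
      _ = (j + 1 : ℕ) * M := by push_cast; ring

section OfNGreedy

variable {e : ℕ → X} {f : ℕ → X →L[ℝ] ℝ} {nseq : ℕ → ℕ} {C : ℝ}

lemma NGreedy.nSuppUnc (hg : NGreedy e f nseq C)
    (hbi : ∀ i j, f i (e j) = if i = j then (1 : ℝ) else 0)
    {α : ℝ} (hα : ∀ i, ‖f i‖ ≤ α) : NSuppUnc e f nseq (C + 1) := by
  intro x A hA
  have hM : ∀ j, |f j x| ≤ α * ‖x‖ := fun j =>
    ((f j).le_opNorm x).trans (mul_le_mul_of_nonneg_right (hα j) (norm_nonneg x))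
  set y := ∑ i ∈ A, (α * ‖x‖ - f i x) • e i
  have hcoeff : ∀ j, f j (x + y) = if j ∈ A then α * ‖x‖ else f j x := fun j => by
    rw [map_add, coeff_sum_smul hbi]
    split_ifs <;> ring
  have hgreedy : ∀ i ∈ A, ∀ j ∉ A, |f j (x + y)| ≤ |f i (x + y)| := fun i hi j hj => by
    rw [hcoeff, hcoeff, if_pos hi, if_neg hj, abs_of_nonneg ((abs_nonneg _).trans (hM j))]
    exact hM j
  have hPA : ∑ i ∈ A, f i (x + y) • e i = ∑ i ∈ A, f i x • e i + y := by
    rw [← sum_add_distrib]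
    exact sum_congr rfl fun i hi => by rw [hcoeff, if_pos hi, ← add_smul, add_sub_cancel]
  have hres := hg (x + y) A hA hgreedy y A le_rfl fun i hi => by
    rw [coeff_sum_smul hbi, if_neg hi]
  rw [hPA, add_sub_add_right_eq_sub, add_sub_cancel_right] at hres
  calc ‖∑ i ∈ A, f i x • e i‖ = ‖x - (x - ∑ i ∈ A, f i x • e i)‖ := by rw [sub_sub_cancel]
    _ ≤ ‖x‖ + C * ‖x‖ := (norm_sub_le _ _).trans (add_le_add le_rfl hres)
    _ = (C + 1) * ‖x‖ := by ring

lemma NGreedy.norm_sum_le_of_disjoint (hg : NGreedy e f nseq C)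
    (hbi : ∀ i j, f i (e j) = if i = j then (1 : ℝ) else 0) {A B : Finset ℕ}
    (hAB : Disjoint A B) (hcard : A.card ≤ B.card) (hB : ∃ k, B.card = nseq k) :
    ‖∑ i ∈ A, e i‖ ≤ C * ‖∑ i ∈ B, e i‖ := by
  set x := ∑ i ∈ A, e i + ∑ i ∈ B, e i
  have hcoeff : ∀ j, f j x = (if j ∈ A then 1 else 0) + if j ∈ B then 1 else 0 := fun j => by
    rw [map_add, coeff_sum hbi, coeff_sum hbi]
  have hgreedy : ∀ i ∈ B, ∀ j ∉ B, |f j x| ≤ |f i x| := fun i hi j hj => by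
    rw [hcoeff, hcoeff, if_neg (disjoint_right.1 hAB hi), if_pos hi, if_neg hj]
    split_ifs <;> norm_num
  have hPB : ∑ i ∈ B, f i x • e i = ∑ i ∈ B, e i := sum_congr rfl fun i hi => by
    rw [hcoeff, if_neg (disjoint_right.1 hAB hi), if_pos hi, zero_add, one_smul]
  have hres := hg x B hB hgreedy (∑ i ∈ A, e i) A hcard fun i hi => by
    rw [coeff_sum hbi, if_neg hi]
  rwa [hPB, add_sub_cancel_right, add_sub_cancel_left] at hres

lemma NGreedy.nDem (hg : NGreedy e f nseq C)
    (hbi : ∀ i j, f i (e j) = if i = j then (1 : ℝ) else 0) (hC : 0 ≤ C) :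
    NDem e nseq (C * C) := by
  classical
  intro A B hAB _ hB
  obtain ⟨D, hD, hDcard⟩ := (A ∪ B).exists_disjoint_card_eq B.card
  rw [disjoint_union_left] at hD
  calc ‖∑ i ∈ A, e i‖ ≤ C * ‖∑ i ∈ D, e i‖ :=
        hg.norm_sum_le_of_disjoint hbi hD.1 (hDcard ▸ hAB) (hDcard ▸ hB)
    _ ≤ C * (C * ‖∑ i ∈ B, e i‖) :=
        mul_le_mul_of_nonneg_left (hg.norm_sum_le_of_disjoint hbi hD.2.symm hDcard.le hB) hC
    _ = C * C * ‖∑ i ∈ B, e i‖ := by ring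

end OfNGreedy

def SuppUnc (e : ℕ → X) (f : ℕ → X →L[ℝ] ℝ) (K : ℝ) : Prop :=
  ∀ (x : X) (A : Finset ℕ), ‖∑ i ∈ A, f i x • e i‖ ≤ K * ‖x‖

def Dem (e : ℕ → X) (C : ℝ) : Prop :=
  ∀ A B : Finset ℕ, A.card ≤ B.card → ‖∑ i ∈ A, e i‖ ≤ C * ‖∑ i ∈ B, e i‖

section Unconditional

variable {e : ℕ → X} {f : ℕ → X →L[ℝ] ℝ} {nseq : ℕ → ℕ} {K : ℝ}

/-- Padding `A` with indices outside the support of `y` brings its cardinality into `nseq`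
without changing the partial sum. -/
lemma NSuppUnc.norm_sum_le_of_coeff_eq_zero (hsu : NSuppUnc e f nseq K)
    (hmono : StrictMono nseq) {y : X} {S : Finset ℕ} (hy : ∀ i ∉ S, f i y = 0)
    (A : Finset ℕ) : ‖∑ i ∈ A, f i y • e i‖ ≤ K * ‖y‖ := by
  classical
  obtain ⟨D, hD, hDcard⟩ := (A ∪ S).exists_disjoint_card_eq (nseq A.card - A.card)
  rw [disjoint_union_left] at hD
  have hD0 : ∑ i ∈ D, f i y • e i = 0 := sum_eq_zero fun i hi => by
    rw [hy i (disjoint_right.1 hD.2 hi), zero_smul]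
  have hcard : (A ∪ D).card = nseq A.card := by
    have := hmono.le_apply (x := A.card)
    rw [card_union_of_disjoint hD.1, hDcard]
    omega
  simpa only [sum_union hD.1, hD0, add_zero] using hsu y (A ∪ D) ⟨_, hcard⟩

lemma NSuppUnc.suppUnc (hsu : NSuppUnc e f nseq K)
    (hbi : ∀ i j, f i (e j) = if i = j then (1 : ℝ) else 0) (hmono : StrictMono nseq)
    (hdense : Dense (↑(Submodule.span ℝ (Set.range e)) : Set X)) : SuppUnc e f K := by
  intro x A
  refine hdense.induction (fun y hy => ?_) (isClosed_le (by fun_prop) (by fun_prop)) x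
  obtain ⟨c, rfl⟩ := Finsupp.mem_span_range_iff_exists_finsupp.1 hy
  refine hsu.norm_sum_le_of_coeff_eq_zero hmono (S := c.support) (fun i hi => ?_) A
  rw [Finsupp.sum, coeff_sum_smul hbi, if_neg hi]

lemma SuppUnc.norm_sum_le_of_subset (hsu : SuppUnc e f K)
    (hbi : ∀ i j, f i (e j) = if i = j then (1 : ℝ) else 0) {T S : Finset ℕ} (hTS : T ⊆ S) :
    ‖∑ i ∈ T, e i‖ ≤ K * ‖∑ i ∈ S, e i‖ := by
  simpa only [sum_coeff_sum_of_subset hbi hTS] using hsu (∑ i ∈ S, e i) T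

lemma SuppUnc.mul_norm_sum_le (hsu : SuppUnc e f K) {z : X} {S : Finset ℕ} {t : ℝ}
    (ht : 0 ≤ t) (hS : ∀ i ∈ S, t ≤ |f i z|) : t * ‖∑ i ∈ S, e i‖ ≤ 2 * K * ‖z‖ := by
  have hrescale : ∀ i ∈ S, (t / f i z) • f i z • e i = t • e i := fun i hi => by
    rw [smul_smul]
    rcases eq_or_ne (f i z) 0 with h0 | h0
    · have : t = 0 := le_antisymm (by simpa [h0] using hS i hi) ht
      simp [this]
    · rw [div_mul_cancel₀ _ h0]
  have habs : ∀ i ∈ S, |t / f i z| ≤ 1 := fun i hi => by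
    rw [abs_div, abs_of_nonneg ht]
    exact div_le_one_of_le₀ (hS i hi) (abs_nonneg _)
  have h := norm_sum_smul_le_of_abs_le (fun i => f i z • e i) (fun T _ => hsu z T)
    zero_le_one habs
  rwa [sum_congr rfl hrescale, ← smul_sum, norm_smul, Real.norm_of_nonneg ht, mul_one,
    ← mul_assoc] at h

end Unconditional

section Democracy

variable {e : ℕ → X} {f : ℕ → X →L[ℝ] ℝ} {nseq : ℕ → ℕ} {K C : ℝ}

lemma norm_sum_le_mul_norm_sum_of_card_le
    (hbi : ∀ i j, f i (e j) = if i = j then (1 : ℝ) else 0)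
    {α₁ α₂ : ℝ} (hα₁ : ∀ i, ‖e i‖ ≤ α₁) (hα₂ : ∀ i, ‖f i‖ ≤ α₂)
    {N : ℕ} {A B : Finset ℕ} (hAB : A.card ≤ B.card) (hB : B.card ≤ N) :
    ‖∑ i ∈ A, e i‖ ≤ N * α₁ * α₂ * ‖∑ i ∈ B, e i‖ := by
  have hα₁0 : 0 ≤ α₁ := (norm_nonneg _).trans (hα₁ 0)
  have hα₂0 : 0 ≤ α₂ := (norm_nonneg _).trans (hα₂ 0)
  rcases A.eq_empty_or_nonempty with rfl | hA
  · simp only [sum_empty, norm_zero]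
    positivity
  obtain ⟨i, hi⟩ := card_pos.1 (hA.card_pos.trans_le hAB)
  have hB1 : 1 ≤ α₂ * ‖∑ j ∈ B, e j‖ :=
    (one_le_norm_coeff_mul_norm_sum hbi hi).trans
      (mul_le_mul_of_nonneg_right (hα₂ i) (norm_nonneg _))
  calc ‖∑ i ∈ A, e i‖ ≤ ∑ i ∈ A, ‖e i‖ := norm_sum_le _ _
    _ ≤ A.card • α₁ := sum_le_card_nsmul _ _ _ fun i _ => hα₁ i
    _ ≤ N * α₁ * 1 := by
        rw [nsmul_eq_mul, mul_one]
        gcongr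
        exact_mod_cast hAB.trans hB
    _ ≤ N * α₁ * (α₂ * ‖∑ i ∈ B, e i‖) := by gcongr
    _ = N * α₁ * α₂ * ‖∑ i ∈ B, e i‖ := by ring

lemma NDem.norm_sum_le_of_card_le_of_le_card (hdem : NDem e nseq C) (hsu : SuppUnc e f K)
    (hbi : ∀ i j, f i (e j) = if i = j then (1 : ℝ) else 0) (hK : 0 ≤ K) (hC : 0 ≤ C)
    {m : ℕ} {A B : Finset ℕ} (hA : A.card ≤ nseq m) (hB : nseq m ≤ B.card) :
    ‖∑ i ∈ A, e i‖ ≤ K * C * K * ‖∑ i ∈ B, e i‖ := by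
  obtain ⟨A', hAA', hA'⟩ := Infinite.exists_superset_card_eq A (nseq m) hA
  obtain ⟨B', hB'B, hB'⟩ := exists_subset_card_eq hB
  calc ‖∑ i ∈ A, e i‖ ≤ K * ‖∑ i ∈ A', e i‖ := hsu.norm_sum_le_of_subset hbi hAA'
    _ ≤ K * (C * ‖∑ i ∈ B', e i‖) := by
        gcongr
        exact hdem A' B' (by omega) ⟨m, hA'⟩ ⟨m, hB'⟩
    _ ≤ K * (C * (K * ‖∑ i ∈ B, e i‖)) := by
        gcongr
        exact hsu.norm_sum_le_of_subset hbi hB'B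
    _ = K * C * K * ‖∑ i ∈ B, e i‖ := by ring

/-- Bounded gaps: a set of cardinality below `nseq (m + 1)` splits into at most `l` pieces
of cardinality at most `nseq m`. -/
lemma NDem.dem (hdem : NDem e nseq C) (hsu : SuppUnc e f K)
    (hbi : ∀ i j, f i (e j) = if i = j then (1 : ℝ) else 0) (hK : 0 ≤ K) (hC : 0 ≤ C)
    (hmono : StrictMono nseq) {l : ℕ} (hgaps : ∀ k, nseq (k + 1) ≤ l * nseq k)
    {α₁ α₂ : ℝ} (hα₁ : ∀ i, ‖e i‖ ≤ α₁) (hα₂ : ∀ i, ‖f i‖ ≤ α₂) :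
    Dem e (l * (K * C * K) + nseq 0 * α₁ * α₂) := by
  intro A B hAB
  have hα₁0 : 0 ≤ α₁ := (norm_nonneg _).trans (hα₁ 0)
  have hα₂0 : 0 ≤ α₂ := (norm_nonneg _).trans (hα₂ 0)
  have hB0 := norm_nonneg (∑ i ∈ B, e i)
  rcases le_or_gt (nseq 0) B.card with hB | hB
  · obtain ⟨m, hmB, hBm⟩ := hmono.exists_apply_le_lt_apply_succ hB
    have hA : A.card ≤ l * nseq m := by linarith [hgaps m]
    have := norm_sum_le_mul_of_card_le_mul e
      (fun s hs => hdem.norm_sum_le_of_card_le_of_le_card hsu hbi hK hC hs hmB) l hA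
    nlinarith [mul_nonneg (mul_nonneg (Nat.cast_nonneg (nseq 0)) hα₁0) (mul_nonneg hα₂0 hB0)]
  · have := norm_sum_le_mul_norm_sum_of_card_le hbi hα₁ hα₂ hAB hB.le
    nlinarith [mul_nonneg (mul_nonneg (Nat.cast_nonneg l) (mul_nonneg (mul_nonneg hK hC) hK)) hB0]

end Democracy

section Greedy

variable {e : ℕ → X} {f : ℕ → X →L[ℝ] ℝ} {K D : ℝ}

/-- With `t = min_{i ∈ A} |f i x|`, the coefficients of `x` on `F \ A` are at most `t`, while
those of `x - y` on `A \ F` are those of `x`, hence at least `t`; democracy compares the two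
indicator sums, since `|F \ A| ≤ |A \ F|`. -/
lemma SuppUnc.norm_sum_sdiff_le (hsu : SuppUnc e f K) (hdem : Dem e D)
    (hbi : ∀ i j, f i (e j) = if i = j then (1 : ℝ) else 0) (hK : 0 ≤ K) (hD : 0 ≤ D)
    {x : X} {A : Finset ℕ} (hgreedy : ∀ i ∈ A, ∀ j ∉ A, |f j x| ≤ |f i x|)
    {y : X} {F : Finset ℕ} (hF : F.card ≤ A.card) (hy : ∀ i ∉ F, f i y = 0) :
    ‖∑ i ∈ F \ A, f i x • e i‖ ≤ 4 * K * K * D * ‖x - y‖ := by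
  rcases A.eq_empty_or_nonempty with rfl | hA
  · simp only [card_eq_zero.1 (Nat.le_zero.1 hF), empty_sdiff, sum_empty, norm_zero]
    positivity
  obtain ⟨i₀, hi₀, hmin⟩ := A.exists_min_image (fun i => |f i x|) hA
  set t := |f i₀ x|
  have hupper : ‖∑ i ∈ F \ A, f i x • e i‖ ≤ 2 * t * (K * ‖∑ i ∈ F \ A, e i‖) :=
    norm_sum_smul_le_of_abs_le e (fun T hT => hsu.norm_sum_le_of_subset hbi hT) (abs_nonneg _)
      fun i hi => hgreedy i₀ hi₀ i (mem_sdiff.1 hi).2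
  have hlower : t * ‖∑ i ∈ A \ F, e i‖ ≤ 2 * K * ‖x - y‖ :=
    hsu.mul_norm_sum_le (abs_nonneg _) fun i hi => by
      rw [map_sub, hy i (mem_sdiff.1 hi).2, sub_zero]
      exact hmin i (mem_sdiff.1 hi).1
  have hcard : (F \ A).card ≤ (A \ F).card := by
    have := card_sdiff_add_card_inter F A
    have := card_sdiff_add_card_inter A F
    rw [inter_comm] at this
    omega
  calc ‖∑ i ∈ F \ A, f i x • e i‖ ≤ 2 * t * (K * (D * ‖∑ i ∈ A \ F, e i‖)) := by
        refine hupper.trans ?_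
        gcongr
        exact hdem _ _ hcard
    _ = 2 * K * D * (t * ‖∑ i ∈ A \ F, e i‖) := by ring
    _ ≤ 2 * K * D * (2 * K * ‖x - y‖) := by gcongr
    _ = 4 * K * K * D * ‖x - y‖ := by ring

/-- Since `y` is its own expansion on `A ∪ F`,
`x - P_A x = (x - y) - P_{A ∪ F} (x - y) + P_{F \ A} x`. -/
lemma SuppUnc.nGreedy (hsu : SuppUnc e f K) (hdem : Dem e D)
    (hbi : ∀ i j, f i (e j) = if i = j then (1 : ℝ) else 0)
    (htotal : ∀ x : X, (∀ i, f i x = 0) → x = 0) (hK : 0 ≤ K) (hD : 0 ≤ D) (nseq : ℕ → ℕ) :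
    NGreedy e f nseq (1 + K + 4 * K * K * D) := by
  classical
  intro x A _ hgreedy y F hF hy
  have hyexp : ∑ i ∈ A ∪ F, f i y • e i = y :=
    sum_coeff_smul_eq_self hbi htotal fun i hi => hy i fun h => hi (mem_union_right A h)
  have hxexp : ∑ i ∈ A ∪ F, f i x • e i = ∑ i ∈ A, f i x • e i + ∑ i ∈ F \ A, f i x • e i := by
    rw [← union_sdiff_self_eq_union, sum_union disjoint_sdiff]
  have hsplit : x - ∑ i ∈ A, f i x • e i
      = (x - y) - ∑ i ∈ A ∪ F, f i (x - y) • e i + ∑ i ∈ F \ A, f i x • e i := by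
    simp only [map_sub, sub_smul, sum_sub_distrib, hxexp, hyexp]
    abel
  calc ‖x - ∑ i ∈ A, f i x • e i‖
      ≤ ‖(x - y) - ∑ i ∈ A ∪ F, f i (x - y) • e i‖ + ‖∑ i ∈ F \ A, f i x • e i‖ :=
        hsplit ▸ norm_add_le _ _
    _ ≤ (‖x - y‖ + K * ‖x - y‖) + 4 * K * K * D * ‖x - y‖ :=
        add_le_add ((norm_sub_le _ _).trans (add_le_add le_rfl (hsu _ _)))
          (hsu.norm_sum_sdiff_le hdem hbi hK hD hgreedy hF hy)
    _ = (1 + K + 4 * K * K * D) * ‖x - y‖ := by ring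

end Greedy

theorem stmt14_general
    (e : ℕ → X) (f : ℕ → X →L[ℝ] ℝ)
    (hbi : ∀ i j, f i (e j) = if i = j then (1 : ℝ) else 0)
    (htotal : ∀ x : X, (∀ i, f i x = 0) → x = 0)
    (α₁ α₂ : ℝ)
    (hα₁ : ∀ i, ‖e i‖ ≤ α₁) (hα₂ : ∀ i, ‖f i‖ ≤ α₂)
    (hdense : Dense (↑(Submodule.span ℝ (Set.range e)) : Set X))
    (nseq : ℕ → ℕ) (hmono : StrictMono nseq)
    (l : ℕ) (hgaps : ∀ k, nseq (k + 1) ≤ l * nseq k) :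
    (∃ C, 0 < C ∧ NGreedy e f nseq C) ↔
      ((∃ C, 0 < C ∧ NSuppUnc e f nseq C) ∧ (∃ C, 0 < C ∧ NDem e nseq C)) := by
  constructor
  · rintro ⟨C, hC, hg⟩
    exact ⟨⟨C + 1, by positivity, hg.nSuppUnc hbi hα₂⟩, ⟨C * C, by positivity, hg.nDem hbi hC.le⟩⟩
  · rintro ⟨⟨K, hK, hnsu⟩, ⟨C, hC, hndem⟩⟩
    have hsu : SuppUnc e f K := hnsu.suppUnc hbi hmono hdense
    have hdem := hndem.dem hsu hbi hK.le hC.le hmono hgaps hα₁ hα₂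
    have hα₁0 : 0 ≤ α₁ := (norm_nonneg _).trans (hα₁ 0)
    have hα₂0 : 0 ≤ α₂ := (norm_nonneg _).trans (hα₂ 0)
    exact ⟨_, by positivity, hsu.nGreedy hdem hbi htotal hK.le (by positivity) nseq⟩

/-- For a sequence with bounded gaps, a semi-normalized Markushevich basis
is `𝐧`-greedy iff it is `𝐧`-suppression unconditional and `𝐧`-democratic. -/
theorem stmt14 [CompleteSpace X]
    (e : ℕ → X) (f : ℕ → X →L[ℝ] ℝ)
    (hbi : ∀ i j, f i (e j) = if i = j then (1 : ℝ) else 0)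
    (htotal : ∀ x : X, (∀ i, f i x = 0) → x = 0)
    (α₁ α₂ : ℝ) (hα₁pos : 0 < α₁) (hα₂pos : 0 < α₂)
    (hα₁ : ∀ i, ‖e i‖ ≤ α₁) (hα₂ : ∀ i, ‖f i‖ ≤ α₂)
    (hdense : Dense (↑(Submodule.span ℝ (Set.range e)) : Set X))
    (nseq : ℕ → ℕ) (hmono : StrictMono nseq) (hn1 : 0 < nseq 0)
    (l : ℕ) (hl : 2 ≤ l) (hgaps : ∀ k, nseq (k + 1) ≤ l * nseq k) :
    (∃ C, 0 < C ∧ NGreedy e f nseq C) ↔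
      ((∃ C, 0 < C ∧ NSuppUnc e f nseq C) ∧ (∃ C, 0 < C ∧ NDem e nseq C)) :=
  stmt14_general e f hbi htotal α₁ α₂ hα₁ hα₂ hdense nseq hmono l hgaps
end

section
/- Let B be a quasi-greedy basis with quasi-greedy constant C_q over the complex field. If 0 < t ≤ 1 and A is a t-greedy set for x ∈ X, then ‖P_A(x)‖ ≤ (C_q + 4t⁻¹C_q²)‖x‖. (Reduction of the weak-greedy projection bound from the real to the complex case via sign-rotation of the basis.) -/
/-!
Write `x_i = f i x` and let `a = min_{i ∈ A} |x_i|`. Coefficients tend to zero, so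
`G = {i | a ≤ |x_i|}` is a finite greedy set containing `A`, and `|x_i| ≤ a / t` on `G \ A`.
Two Abel summations against the quasi-greedy bounds control the sign vector
`1_{εG} = ∑_{i ∈ G} sgn(x_i) e_i`: since `a • 1_{εG} = P_G x - ∑_{i ∈ G} (1 - a / |x_i|) x_i e_i`
with weights decreasing in `|x_i|`, `a ‖1_{εG}‖ ≤ 2 C ‖x‖`; and since every subsum of `1_{εG}`
is a greedy sum of `1_{εG}`, `‖P_{G \ A} x‖ ≤ (a / t) C ‖1_{εG}‖`. Hence
`‖P_A x‖ ≤ ‖P_G x‖ + ‖P_{G \ A} x‖ ≤ (C + 2 t⁻¹ C²) ‖x‖`.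
-/

open Finset Filter Topology

theorem tendsto_apply_cofinite_zero {𝕜 ι X : Type*} [DecidableEq ι] [NontriviallyNormedField 𝕜]
    [NormedAddCommGroup X] [NormedSpace 𝕜 X] {e : ι → X} {f : ι → X →L[𝕜] 𝕜}
    (hbi : ∀ i j, f i (e j) = if i = j then 1 else 0) {C : ℝ} (hf : ∀ i, ‖f i‖ ≤ C)
    (hdense : Dense (Submodule.span 𝕜 (Set.range e) : Set X)) (x : X) :
    Tendsto (fun i ↦ f i x) cofinite (𝓝 0) := by
  have hequi := ((NormedSpace.equicontinuous_TFAE f).out 5 1).1 (⟨C, hf⟩ : ∃ C, ∀ i, ‖f i‖ ≤ C)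
  have hclosed : IsClosed {x : X | Tendsto (fun i ↦ f i x) cofinite (𝓝 0)} :=
    hequi.isClosed_setOfPred_tendsto continuous_const
  have hspan : (Submodule.span 𝕜 (Set.range e) : Set X) ⊆
      {x : X | Tendsto (fun i ↦ f i x) cofinite (𝓝 0)} := by
    intro y hy
    induction hy using Submodule.span_induction with
    | mem _ h =>
      obtain ⟨j, rfl⟩ := h
      exact tendsto_const_nhds.congr' <|
        (eventually_cofinite_ne j).mono fun i hi ↦ by simp [hbi, hi]
    | zero => simpa using tendsto_const_nhds
    | add _ _ _ _ h₁ h₂ => simpa using h₁.add h₂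
    | smul c _ _ h => simpa using h.const_mul c
  exact hclosed.closure_subset_iff.2 hspan (hdense x)

theorem norm_sum_smul_le_of_superlevel_sums_le {ι E : Type*} [NormedAddCommGroup E]
    [NormedSpace ℝ E] (v : ι → E) (ν : ι → ℝ) {M K : ℝ} (hM : 0 ≤ M)
    (S : Finset ι) (hν : ∀ i ∈ S, 0 ≤ ν i ∧ ν i ≤ M)
    (hK : ∀ T ⊆ S, (∀ i ∈ T, ∀ j ∈ S, j ∉ T → ν j ≤ ν i) → ‖∑ i ∈ T, v i‖ ≤ K) :
    ‖∑ i ∈ S, ν i • v i‖ ≤ M * K := by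
  classical
  have hK₀ : 0 ≤ K := by simpa using hK ∅ (empty_subset S) (by simp)
  induction S using Finset.strongInduction generalizing ν M with
  | H S ih =>
  rcases S.eq_empty_or_nonempty with rfl | hne
  · simpa using mul_nonneg hM hK₀
  obtain ⟨i₀, hi₀, hmin⟩ := S.exists_min_image ν hne
  set m := ν i₀
  set S' := S.filter (m < ν ·)
  have hS' : S' ⊂ S := filter_ssubset.2 ⟨i₀, hi₀, lt_irrefl m⟩
  have hsplit : ∑ i ∈ S, ν i • v i = m • ∑ i ∈ S, v i + ∑ i ∈ S', (ν i - m) • v i := by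
    have hS'_sum : ∑ i ∈ S', (ν i - m) • v i = ∑ i ∈ S, (ν i - m) • v i :=
      sum_filter_of_ne fun i hi h ↦ (hmin i hi).lt_of_ne' (sub_ne_zero.1 (left_ne_zero_of_smul h))
    rw [hS'_sum, smul_sum, ← sum_add_distrib]
    exact sum_congr rfl fun i _ ↦ by rw [← add_smul, add_sub_cancel]
  have hlevel : ‖m • ∑ i ∈ S, v i‖ ≤ m * K := by
    rw [norm_smul, Real.norm_of_nonneg (hν i₀ hi₀).1]
    exact mul_le_mul_of_nonneg_left (hK S subset_rfl fun _ _ _ hj hj' ↦ absurd hj hj') (hν i₀ hi₀).1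
  have hrest : ‖∑ i ∈ S', (ν i - m) • v i‖ ≤ (M - m) * K := by
    refine ih S' hS' _ (sub_nonneg.2 (hν i₀ hi₀).2) (fun i hi ↦ ?_) fun T hT hup ↦ ?_
    · obtain ⟨hiS, hmi⟩ := mem_filter.1 hi
      exact ⟨sub_nonneg.2 hmi.le, sub_le_sub_right (hν i hiS).2 m⟩
    · refine hK T (hT.trans hS'.subset) fun i hi j hjS hjT ↦ ?_
      by_cases hjS' : j ∈ S'
      · simpa using hup i hi j hjS' hjT
      · have hj : ν j = m :=
          le_antisymm (not_lt.1 fun h ↦ hjS' (mem_filter.2 ⟨hjS, h⟩)) (hmin j hjS)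
        exact hj ▸ hmin i (hS'.subset (hT hi))
  calc ‖∑ i ∈ S, ν i • v i‖ ≤ m * K + (M - m) * K :=
        hsplit ▸ (norm_add_le _ _).trans (add_le_add hlevel hrest)
    _ = M * K := by ring

section QuasiGreedy

variable {ι X : Type*} [NormedAddCommGroup X] [NormedSpace ℂ X] {e : ι → X} {f : ι → X →L[ℂ] ℂ}
  {C : ℝ} {x : X}

def IsGreedySet (f : ι → X →L[ℂ] ℂ) (x : X) (A : Finset ι) : Prop :=
  ∀ i ∈ A, ∀ j ∉ A, ‖f j x‖ ≤ ‖f i x‖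

def IsWeakGreedySet (f : ι → X →L[ℂ] ℂ) (x : X) (t : ℝ) (A : Finset ι) : Prop :=
  ∀ i ∈ A, ∀ j ∉ A, t * ‖f j x‖ ≤ ‖f i x‖

def IsQuasiGreedy (e : ι → X) (f : ι → X →L[ℂ] ℂ) (C : ℝ) : Prop :=
  ∀ x A, IsGreedySet f x A → ‖∑ i ∈ A, f i x • e i‖ ≤ C * ‖x‖

theorem isGreedySet_of_mem_iff {a : ℝ} {G : Finset ι} (hG : ∀ i, i ∈ G ↔ a ≤ ‖f i x‖) :
    IsGreedySet f x G := fun i hi j hj ↦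
  (not_le.1 fun h ↦ hj ((hG j).2 h)).le.trans ((hG i).1 hi)

theorem apply_sum_smul [DecidableEq ι] (hbi : ∀ i j, f i (e j) = if i = j then 1 else 0)
    (c : ι → ℂ) (G : Finset ι) (j : ι) :
    f j (∑ i ∈ G, c i • e i) = if j ∈ G then c j else 0 := by
  simp [map_sum, hbi]

theorem IsQuasiGreedy.norm_sum_le_of_subset_of_norm_eq_one [DecidableEq ι]
    (hq : IsQuasiGreedy e f C) (hbi : ∀ i j, f i (e j) = if i = j then 1 else 0) {c : ι → ℂ}
    {G T : Finset ι} (hc : ∀ i ∈ G, ‖c i‖ = 1) (hT : T ⊆ G) :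
    ‖∑ i ∈ T, c i • e i‖ ≤ C * ‖∑ i ∈ G, c i • e i‖ := by
  have hcoeff := apply_sum_smul hbi c G
  have hsum : ∑ i ∈ T, c i • e i = ∑ i ∈ T, f i (∑ i ∈ G, c i • e i) • e i :=
    sum_congr rfl fun i hi ↦ by rw [hcoeff, if_pos (hT hi)]
  refine hsum ▸ hq _ T fun i hi j _ ↦ ?_
  rw [hcoeff, hcoeff, if_pos (hT hi), hc i (hT hi)]
  split_ifs with hj
  exacts [(hc j hj).le, by simp]

theorem IsQuasiGreedy.mul_norm_sum_sign_le (hq : IsQuasiGreedy e f C) {a : ℝ} (ha : 0 < a)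
    {G : Finset ι} (hG : ∀ i, i ∈ G ↔ a ≤ ‖f i x‖) :
    a * ‖∑ i ∈ G, (‖f i x‖⁻¹ • f i x) • e i‖ ≤ 2 * C * ‖x‖ := by
  have hpos : ∀ i ∈ G, 0 < ‖f i x‖ := fun i hi ↦ ha.trans_le ((hG i).1 hi)
  have hPG : ‖∑ i ∈ G, f i x • e i‖ ≤ C * ‖x‖ := hq x G (isGreedySet_of_mem_iff hG)
  have htail : ‖∑ i ∈ G, (1 - a / ‖f i x‖) • (f i x • e i)‖ ≤ 1 * (C * ‖x‖) := by
    refine norm_sum_smul_le_of_superlevel_sums_le _ _ zero_le_one G (fun i hi ↦ ?_)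
      fun T hT hup ↦ hq x T fun i hi j hj ↦ ?_
    · have := (div_le_one (hpos i hi)).2 ((hG i).1 hi)
      have := div_pos ha (hpos i hi)
      constructor <;> linarith
    · by_cases hjG : j ∈ G
      · have := hup i hi j hjG hj
        exact (div_le_div_iff_of_pos_left ha (hpos i (hT hi)) (hpos j hjG)).1 (by linarith)
      · exact isGreedySet_of_mem_iff hG i (hT hi) j hjG
  have hsplit : a • ∑ i ∈ G, (‖f i x‖⁻¹ • f i x) • e i =
      ∑ i ∈ G, f i x • e i - ∑ i ∈ G, (1 - a / ‖f i x‖) • (f i x • e i) := by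
    rw [smul_sum, ← sum_sub_distrib]
    refine sum_congr rfl fun i _ ↦ ?_
    rw [sub_smul, one_smul, sub_sub_cancel, smul_assoc, smul_smul, div_eq_mul_inv]
  calc a * ‖∑ i ∈ G, (‖f i x‖⁻¹ • f i x) • e i‖
      = ‖a • ∑ i ∈ G, (‖f i x‖⁻¹ • f i x) • e i‖ := by rw [norm_smul, Real.norm_of_nonneg ha.le]
    _ ≤ C * ‖x‖ + 1 * (C * ‖x‖) := hsplit ▸ (norm_sub_le _ _).trans (add_le_add hPG htail)
    _ = 2 * C * ‖x‖ := by ring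

theorem IsQuasiGreedy.norm_sum_le_mul_norm_sum_sign [DecidableEq ι] (hq : IsQuasiGreedy e f C)
    (hbi : ∀ i j, f i (e j) = if i = j then 1 else 0) {G D : Finset ι} (hG : ∀ i ∈ G, f i x ≠ 0)
    (hD : D ⊆ G) {M : ℝ} (hM : 0 ≤ M) (hDM : ∀ i ∈ D, ‖f i x‖ ≤ M) :
    ‖∑ i ∈ D, f i x • e i‖ ≤ M * (C * ‖∑ i ∈ G, (‖f i x‖⁻¹ • f i x) • e i‖) := by
  have hsign : ∀ i ∈ G, ‖‖f i x‖⁻¹ • f i x‖ = 1 := fun i hi ↦ by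
    rw [norm_smul, norm_inv, norm_norm, inv_mul_cancel₀ (norm_ne_zero_iff.2 (hG i hi))]
  have hsum : ∑ i ∈ D, f i x • e i = ∑ i ∈ D, ‖f i x‖ • ((‖f i x‖⁻¹ • f i x) • e i) :=
    sum_congr rfl fun i hi ↦ by
      rw [← smul_assoc, smul_smul, mul_inv_cancel₀ (norm_ne_zero_iff.2 (hG i (hD hi))), one_smul]
  rw [hsum]
  exact norm_sum_smul_le_of_superlevel_sums_le _ _ hM D (fun i hi ↦ ⟨norm_nonneg _, hDM i hi⟩)
    fun T hT _ ↦ hq.norm_sum_le_of_subset_of_norm_eq_one hbi hsign (hT.trans hD)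

theorem IsQuasiGreedy.norm_sum_le_of_threshold [DecidableEq ι] (hq : IsQuasiGreedy e f C)
    (hbi : ∀ i j, f i (e j) = if i = j then 1 else 0) (hC : 0 ≤ C) {A : Finset ι} {a t : ℝ}
    (ha : 0 < a) (ht : 0 < t) (hfin : {i | a ≤ ‖f i x‖}.Finite) (hA : ∀ i ∈ A, a ≤ ‖f i x‖)
    (hAc : ∀ j ∉ A, t * ‖f j x‖ ≤ a) :
    ‖∑ i ∈ A, f i x • e i‖ ≤ (C + 2 * t⁻¹ * C ^ 2) * ‖x‖ := by
  set G := hfin.toFinset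
  have hG : ∀ i, i ∈ G ↔ a ≤ ‖f i x‖ := fun i ↦ hfin.mem_toFinset
  have hAG : A ⊆ G := fun i hi ↦ (hG i).2 (hA i hi)
  set w := ∑ i ∈ G, (‖f i x‖⁻¹ • f i x) • e i
  have hPG : ‖∑ i ∈ G, f i x • e i‖ ≤ C * ‖x‖ := hq x G (isGreedySet_of_mem_iff hG)
  have hw : a * ‖w‖ ≤ 2 * C * ‖x‖ := hq.mul_norm_sum_sign_le ha hG
  have hPD : ‖∑ i ∈ G \ A, f i x • e i‖ ≤ a / t * (C * ‖w‖) :=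
    hq.norm_sum_le_mul_norm_sum_sign hbi
      (fun i hi ↦ norm_pos_iff.1 (ha.trans_le ((hG i).1 hi))) sdiff_subset (by positivity)
      fun i hi ↦ (le_div_iff₀' ht).2 (hAc i (mem_sdiff.1 hi).2)
  have hsplit : ∑ i ∈ A, f i x • e i = ∑ i ∈ G, f i x • e i - ∑ i ∈ G \ A, f i x • e i := by
    rw [← sum_sdiff hAG, add_sub_cancel_left]
  calc ‖∑ i ∈ A, f i x • e i‖ ≤ C * ‖x‖ + a / t * (C * ‖w‖) :=
        hsplit ▸ (norm_sub_le _ _).trans (add_le_add hPG hPD)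
    _ = C * ‖x‖ + t⁻¹ * C * (a * ‖w‖) := by ring
    _ ≤ C * ‖x‖ + t⁻¹ * C * (2 * C * ‖x‖) := by gcongr
    _ = (C + 2 * t⁻¹ * C ^ 2) * ‖x‖ := by ring

theorem IsQuasiGreedy.norm_sum_le_of_isWeakGreedySet [DecidableEq ι] (hq : IsQuasiGreedy e f C)
    (hbi : ∀ i j, f i (e j) = if i = j then 1 else 0) (hC : 0 ≤ C)
    (hx : Tendsto (fun i ↦ f i x) cofinite (𝓝 0)) {A : Finset ι} {t : ℝ} (ht : 0 < t)
    (hA : IsWeakGreedySet f x t A) :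
    ‖∑ i ∈ A, f i x • e i‖ ≤ (C + 2 * t⁻¹ * C ^ 2) * ‖x‖ := by
  rcases A.eq_empty_or_nonempty with rfl | hne
  · simpa using by positivity
  obtain ⟨i₀, hi₀, hmin⟩ := A.exists_min_image (‖f · x‖) hne
  have hAc : ∀ j ∉ A, t * ‖f j x‖ ≤ ‖f i₀ x‖ := hA i₀ hi₀
  rcases (norm_nonneg (f i₀ x)).eq_or_lt with ha | ha
  · -- all coordinates off `A` vanish, so `A` is greedy
    have hgreedy : IsGreedySet f x A := fun i _ j hj ↦
      (nonpos_of_mul_nonpos_right (ha ▸ hAc j hj) ht).trans (norm_nonneg _)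
    exact (hq x A hgreedy).trans (by gcongr; exact le_add_of_nonneg_right (by positivity))
  · have hfin : {i | ‖f i₀ x‖ ≤ ‖f i x‖}.Finite := by
      simpa using hx.norm.eventually (gt_mem_nhds (by simpa using ha))
    exact hq.norm_sum_le_of_threshold hbi hC ha ht hfin hmin hAc

end QuasiGreedy

theorem stmt15_general
    {X : Type*} [NormedAddCommGroup X] [NormedSpace ℂ X]
    (e : ℕ → X) (f : ℕ → X →L[ℂ] ℂ)
    (hbi : ∀ i j, f i (e j) = if i = j then (1 : ℂ) else 0)
    (α₂ : ℝ)
    (hα₂ : ∀ i, ‖f i‖ ≤ α₂)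
    (hdense : Dense (↑(Submodule.span ℂ (Set.range e)) : Set X))
    (Cq : ℝ) (hCq : 0 < Cq)
    (hqg : ∀ (x : X) (A : Finset ℕ),
      (∀ i ∈ A, ∀ j ∉ A, ‖f j x‖ ≤ ‖f i x‖) →
      ‖∑ i ∈ A, f i x • e i‖ ≤ Cq * ‖x‖)
    (t : ℝ) (ht0 : 0 < t) :
    ∀ (x : X) (A : Finset ℕ),
      (∀ i ∈ A, ∀ j ∉ A, t * ‖f j x‖ ≤ ‖f i x‖) →
      ‖∑ i ∈ A, f i x • e i‖ ≤ (Cq + 4 * t⁻¹ * Cq ^ 2) * ‖x‖ := by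
  intro x A hA
  have hq : IsQuasiGreedy e f Cq := hqg
  have hx := tendsto_apply_cofinite_zero hbi hα₂ hdense x
  exact (hq.norm_sum_le_of_isWeakGreedySet hbi hCq.le hx ht0 hA).trans (by gcongr; norm_num)

/-- For a `Cq`-quasi-greedy basis of a complex Banach space, if `A` is a
`t`-greedy set for `x` (`0 < t ≤ 1`), then `‖P_A(x)‖ ≤ (Cq + 4t⁻¹Cq²)‖x‖`. -/
theorem stmt15
    {X : Type*} [NormedAddCommGroup X] [NormedSpace ℂ X]
    (e : ℕ → X) (f : ℕ → X →L[ℂ] ℂ)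
    (hbi : ∀ i j, f i (e j) = if i = j then (1 : ℂ) else 0)
    (α₁ α₂ : ℝ) (hα₁pos : 0 < α₁) (hα₂pos : 0 < α₂)
    (hα₁ : ∀ i, ‖e i‖ ≤ α₁) (hα₂ : ∀ i, ‖f i‖ ≤ α₂)
    (hdense : Dense (↑(Submodule.span ℂ (Set.range e)) : Set X))
    (Cq : ℝ) (hCq : 0 < Cq)
    (hqg : ∀ (x : X) (A : Finset ℕ),
      (∀ i ∈ A, ∀ j ∉ A, ‖f j x‖ ≤ ‖f i x‖) →
      ‖∑ i ∈ A, f i x • e i‖ ≤ Cq * ‖x‖)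
    (t : ℝ) (ht0 : 0 < t) (ht1 : t ≤ 1) :
    ∀ (x : X) (A : Finset ℕ),
      (∀ i ∈ A, ∀ j ∉ A, t * ‖f j x‖ ≤ ‖f i x‖) →
      ‖∑ i ∈ A, f i x • e i‖ ≤ (Cq + 4 * t⁻¹ * Cq ^ 2) * ‖x‖ :=
  stmt15_general e f hbi α₂ hα₂ hdense Cq hCq hqg t ht0
end

section
/- If a basis B is C_p-n-partially greedy (with t = 1), then B is n-order-superconservative with constant Δ_osc ≤ C_p: that is, ‖1_{εA}‖ ≤ C_p‖1_{ε'B}‖ whenever |A| = |B|, there is n ∈ n with A ≤ n < B, and ε, ε' are sign sequences on A, B. -/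
open Finset

/-- If a basis is `Cp`-`𝐧`-partially greedy (t = 1), then it is
`𝐧`-order-superconservative with constant at most `Cp`: `‖1_{εA}‖ ≤ Cp‖1_{ε'B}‖`
whenever `|A| = |B|` and there is `n ∈ 𝐧` with `A ≤ n < B`. -/
theorem stmt17
    {X : Type*} [NormedAddCommGroup X] [NormedSpace ℝ X]
    (e : ℕ → X) (f : ℕ → X →L[ℝ] ℝ)
    (hbi : ∀ i j, f i (e j) = if i = j then (1 : ℝ) else 0)
    (α₁ α₂ : ℝ) (hα₁pos : 0 < α₁) (hα₂pos : 0 < α₂)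
    (hα₁ : ∀ i, ‖e i‖ ≤ α₁) (hα₂ : ∀ i, ‖f i‖ ≤ α₂)
    (nseq : ℕ → ℕ) (hmono : StrictMono nseq) (hn1 : 0 < nseq 0)
    (Cp : ℝ) (hCp : 0 < Cp)
    (hpg : ∀ (x : X) (k : ℕ) (A : Finset ℕ), A.card = nseq k →
      (∀ i ∈ A, ∀ j ∉ A, |f j x| ≤ |f i x|) →
      ‖x - ∑ i ∈ A, f i x • e i‖ ≤
        Cp * ‖x - ∑ i ∈ Finset.range (nseq k), f i x • e i‖) :
    ∀ (A B : Finset ℕ) (ε ε' : ℕ → ℝ), A.card = B.card →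
      (∃ k, A ⊆ Finset.range (nseq k) ∧ ∀ j ∈ B, nseq k ≤ j) →
      (∀ i ∈ A, |ε i| = 1) → (∀ i ∈ B, |ε' i| = 1) →
      ‖∑ i ∈ A, ε i • e i‖ ≤ Cp * ‖∑ i ∈ B, ε' i • e i‖ := by
  rintro A B ε ε' hcard ⟨k, hAk, hBk⟩ hεA hε'B
  classical
  set D : Finset ℕ := Finset.range (nseq k) \ A with hD
  have hAD : Disjoint A D := Finset.disjoint_sdiff
  have hBr : ∀ j ∈ B, j ∉ Finset.range (nseq k) := by
    intro j hj
    simp only [Finset.mem_range, not_lt]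
    exact hBk j hj
  have hBA : Disjoint B A := by
    rw [Finset.disjoint_left]
    intro j hj hj'
    exact hBr j hj (hAk hj')
  have hBD : Disjoint B D := by
    rw [Finset.disjoint_left]
    intro j hj hj'
    exact hBr j hj (Finset.mem_sdiff.mp hj').1
  set x : X := ∑ i ∈ A, ε i • e i + ∑ i ∈ D, (1:ℝ) • e i + ∑ i ∈ B, ε' i • e i with hx
  have hf : ∀ j, f j x = (if j ∈ A then ε j else 0) + (if j ∈ D then 1 else 0)
      + (if j ∈ B then ε' j else 0) := by
    intro j
    simp only [hx, map_add, map_sum, map_smul, hbi, smul_eq_mul, mul_ite, mul_one,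
      mul_zero, Finset.sum_ite_eq]
  set G : Finset ℕ := B ∪ D with hG
  have hAcard : A.card ≤ nseq k := by
    simpa using Finset.card_le_card hAk
  have hDcard : D.card = nseq k - A.card := by
    rw [hD, Finset.card_sdiff_of_subset hAk, Finset.card_range]
  have hGcard : G.card = nseq k := by
    rw [hG, Finset.card_union_of_disjoint hBD, hDcard, ← hcard]
    omega
  have hgreedy : ∀ i ∈ G, ∀ j ∉ G, |f j x| ≤ |f i x| := by
    intro i hi j hj
    rw [hG, Finset.mem_union] at hi
    rw [hG, Finset.mem_union, not_or] at hj
    obtain ⟨hjB, hjD⟩ := hj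
    have hfi : |f i x| = 1 := by
      rcases hi with hi | hi
      · have h1 : i ∉ A := Finset.disjoint_left.mp hBA hi
        have h2 : i ∉ D := Finset.disjoint_left.mp hBD hi
        rw [hf]
        simp [h1, h2, hi, hε'B i hi]
      · have h1 : i ∉ A := fun h => Finset.disjoint_left.mp hAD h hi
        have h2 : i ∉ B := fun h => Finset.disjoint_left.mp hBD h hi
        rw [hf]
        simp [h1, h2, hi]
    rw [hfi, hf]
    by_cases hjA : j ∈ A
    · simp [hjA, hjB, hjD]
      exact le_of_eq (hεA j hjA)
    · simp [hjA, hjB, hjD]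
  have key := hpg x k G hGcard hgreedy
  have hrange : Finset.range (nseq k) = A ∪ D := by
    rw [hD, Finset.union_sdiff_of_subset hAk]
  have h1 : ∑ i ∈ G, f i x • e i = ∑ i ∈ B, ε' i • e i + ∑ i ∈ D, (1:ℝ) • e i := by
    rw [hG, Finset.sum_union hBD]
    congr 1
    · refine Finset.sum_congr rfl fun i hi => ?_
      have h1 : i ∉ A := Finset.disjoint_left.mp hBA hi
      have h2 : i ∉ D := Finset.disjoint_left.mp hBD hi
      rw [hf]
      simp [h1, h2, hi]
    · refine Finset.sum_congr rfl fun i hi => ?_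
      have h1 : i ∉ A := fun h => Finset.disjoint_left.mp hAD h hi
      have h2 : i ∉ B := fun h => Finset.disjoint_left.mp hBD h hi
      rw [hf]
      simp [h1, h2, hi]
  have h2 : ∑ i ∈ Finset.range (nseq k), f i x • e i
      = ∑ i ∈ A, ε i • e i + ∑ i ∈ D, (1:ℝ) • e i := by
    rw [hrange, Finset.sum_union hAD]
    congr 1
    · refine Finset.sum_congr rfl fun i hi => ?_
      have h1 : i ∉ D := fun h => Finset.disjoint_left.mp hAD hi h
      have h2 : i ∉ B := fun h => Finset.disjoint_left.mp hBA h hi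
      rw [hf]
      simp [h1, h2, hi]
    · refine Finset.sum_congr rfl fun i hi => ?_
      have h1 : i ∉ A := fun h => Finset.disjoint_left.mp hAD h hi
      have h2 : i ∉ B := fun h => Finset.disjoint_left.mp hBD h hi
      rw [hf]
      simp [h1, h2, hi]
  have e1 : x - ∑ i ∈ G, f i x • e i = ∑ i ∈ A, ε i • e i := by
    rw [h1, hx]; abel
  have e2 : x - ∑ i ∈ Finset.range (nseq k), f i x • e i = ∑ i ∈ B, ε' i • e i := by
    rw [h2, hx]; abel
  rw [e1, e2] at key
  exact key
end

section
/- Suppose n has l-bounded gaps and B is a basis that is K_u-unconditional for constant coefficients. If B is Δ_d-n-democratic, then B is superdemocratic with constant at most max{α₁α₂n₁, l·K_u²·Δ_d}; if B is Δ_s-n-superdemocratic, then B is superdemocratic with constant at most max{α₁α₂n₁, l·K_u·Δ_s}. (No Schauder assumption is needed.) -/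
open Finset

/-- Dropping coordinates via sign-averaging. -/
lemma aux_drop19 {X : Type*} [NormedAddCommGroup X] [NormedSpace ℝ X]
    (e : ℕ → X) (S T : Finset ℕ) (hST : S ⊆ T) (ε : ℕ → ℝ)
    (hε : ∀ i ∈ S, |ε i| = 1) (M : ℝ)
    (hM : ∀ η : ℕ → ℝ, (∀ i ∈ T, |η i| = 1) → ‖∑ i ∈ T, η i • e i‖ ≤ M) :
    ‖∑ i ∈ S, ε i • e i‖ ≤ M := by
  set εp : ℕ → ℝ := fun i => if i ∈ S then ε i else 1 with hεpdef
  set εm : ℕ → ℝ := fun i => if i ∈ S then ε i else -1 with hεmdef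
  have hid : (∑ i ∈ T, εp i • e i) + (∑ i ∈ T, εm i • e i)
      = (2 : ℝ) • ∑ i ∈ S, ε i • e i := by
    rw [← Finset.sum_add_distrib, Finset.smul_sum,
      ← Finset.sum_subset hST (by intro i _ hiS; simp [εp, εm, hiS])]
    refine Finset.sum_congr rfl fun i hi => ?_
    simp [εp, εm, hi, two_smul]
  have hp : ∀ i ∈ T, |εp i| = 1 := by
    intro i hi
    by_cases h : i ∈ S
    · simp [εp, h, hε i h]
    · simp [εp, h]
  have hm : ∀ i ∈ T, |εm i| = 1 := by
    intro i hi
    by_cases h : i ∈ S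
    · simp [εm, h, hε i h]
    · simp [εm, h]
  have h1 := hM εp hp
  have h2 := hM εm hm
  have h3 := norm_add_le (∑ i ∈ T, εp i • e i) (∑ i ∈ T, εm i • e i)
  rw [hid] at h3
  have h4 : ‖(2 : ℝ) • ∑ i ∈ S, ε i • e i‖ = 2 * ‖∑ i ∈ S, ε i • e i‖ := by
    rw [norm_smul]; simp
  rw [h4] at h3
  linarith

/-- Splitting a set into at most `m` pieces of size `≤ N`. -/
lemma aux_split19 {X : Type*} [NormedAddCommGroup X]
    (v : ℕ → X) (M : ℝ) (hM : 0 ≤ M) (N : ℕ) :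
    ∀ (m : ℕ) (S : Finset ℕ), S.card ≤ m * N →
      (∀ T ⊆ S, T.card ≤ N → ‖∑ i ∈ T, v i‖ ≤ M) →
      ‖∑ i ∈ S, v i‖ ≤ (m : ℝ) * M := by
  intro m
  induction m with
  | zero =>
    intro S hS _
    have : S = ∅ := Finset.card_eq_zero.mp (Nat.le_zero.mp (by simpa using hS))
    simp [this]
  | succ m ih =>
    intro S hS hT
    by_cases h : S.card ≤ N
    · have h0 := hT S le_rfl h
      have : (0 : ℝ) ≤ (m : ℝ) * M := by positivity
      calc ‖∑ i ∈ S, v i‖ ≤ M := h0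
        _ ≤ ((m + 1 : ℕ) : ℝ) * M := by push_cast; nlinarith
    · push_neg at h
      obtain ⟨T, hTS, hTc⟩ := Finset.exists_subset_card_eq h.le
      have hsd : (S \ T).card ≤ m * N := by
        rw [Finset.card_sdiff_of_subset hTS, hTc]
        rw [Nat.succ_mul] at hS
        omega
      have h1 := ih (S \ T) hsd (fun T' hT' hc => hT T' (hT'.trans Finset.sdiff_subset) hc)
      have h2 := hT T hTS hTc.le
      have hsum : ∑ i ∈ S, v i = ∑ i ∈ S \ T, v i + ∑ i ∈ T, v i := (Finset.sum_sdiff hTS).symm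
      rw [hsum]
      calc ‖∑ i ∈ S \ T, v i + ∑ i ∈ T, v i‖
          ≤ ‖∑ i ∈ S \ T, v i‖ + ‖∑ i ∈ T, v i‖ := norm_add_le _ _
        _ ≤ (m : ℝ) * M + M := add_le_add h1 h2
        _ = ((m + 1 : ℕ) : ℝ) * M := by push_cast; ring

lemma aux_master19 {X : Type*} [NormedAddCommGroup X] [NormedSpace ℝ X]
    (e : ℕ → X) (f : ℕ → X →L[ℝ] ℝ)
    (hbi : ∀ i j, f i (e j) = if i = j then (1 : ℝ) else 0)
    (α₁ α₂ : ℝ) (hα₁pos : 0 < α₁) (hα₂pos : 0 < α₂)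
    (hα₁ : ∀ i, ‖e i‖ ≤ α₁) (hα₂ : ∀ i, ‖f i‖ ≤ α₂)
    (nseq : ℕ → ℕ) (hmono : StrictMono nseq) (hn1 : 0 < nseq 0)
    (l : ℕ) (hgaps : ∀ k, nseq (k + 1) ≤ l * nseq k)
    (A B : Finset ℕ) (εA εB : ℕ → ℝ) (hAB : A.card ≤ B.card)
    (hεA : ∀ i ∈ A, |εA i| = 1) (hεB : ∀ i ∈ B, |εB i| = 1)
    (C : ℝ) (hC : 0 ≤ C)
    (hkey : ∀ (k : ℕ) (T' : Finset ℕ) (η : ℕ → ℝ), T'.card = nseq k → nseq k ≤ B.card →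
      (∀ i ∈ T', |η i| = 1) → ‖∑ i ∈ T', η i • e i‖ ≤ C * ‖∑ i ∈ B, εB i • e i‖) :
    ‖∑ i ∈ A, εA i • e i‖ ≤
      max (α₁ * α₂ * (nseq 0 : ℝ)) ((l : ℝ) * C) * ‖∑ i ∈ B, εB i • e i‖ := by
  set D := ‖∑ i ∈ B, εB i • e i‖ with hDdef
  have hD0 : 0 ≤ D := norm_nonneg _
  by_cases hsmall : nseq 0 ≤ A.card
  · -- main case
    set j := Nat.findGreatest (fun k => nseq k ≤ A.card) A.card with hjdef
    have hjle : nseq j ≤ A.card := Nat.findGreatest_spec (P := fun k => nseq k ≤ A.card) (Nat.zero_le _) hsmall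
    have hlow : ∀ k, nseq 0 + k ≤ nseq k := by
      intro k
      induction k with
      | zero => simp
      | succ k ih =>
        have h : nseq k < nseq (k + 1) := hmono (by omega)
        omega
    have hjlt : j + 1 ≤ A.card := by have := hlow j; omega
    have hAcard : A.card < nseq (j + 1) := by
      by_contra hcon
      push_neg at hcon
      exact Nat.findGreatest_is_greatest (Nat.lt_succ_self j) hjlt hcon
    have hcardl : A.card ≤ l * nseq j := hAcard.le.trans (hgaps j)
    have hpiece : ∀ T ⊆ A, T.card ≤ nseq j → ‖∑ i ∈ T, εA i • e i‖ ≤ C * D := by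
      intro T hTA hTc
      obtain ⟨T', hTT', hT'c⟩ := Infinite.exists_superset_card_eq T (nseq j) hTc
      exact aux_drop19 e T T' hTT' εA (fun i hi => hεA i (hTA hi)) (C * D)
        (fun η hη => hkey j T' η hT'c (hjle.trans hAB) hη)
    have hmain := aux_split19 (fun i => εA i • e i) (C * D) (mul_nonneg hC hD0)
      (nseq j) l A hcardl hpiece
    calc ‖∑ i ∈ A, εA i • e i‖ ≤ (l : ℝ) * (C * D) := hmain
      _ = ((l : ℝ) * C) * D := by ring
      _ ≤ max (α₁ * α₂ * (nseq 0 : ℝ)) ((l : ℝ) * C) * D :=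
          mul_le_mul_of_nonneg_right (le_max_right _ _) hD0
  · -- small case
    rcases Finset.eq_empty_or_nonempty B with hB | ⟨j0, hj0⟩
    · have hA : A = ∅ := Finset.card_eq_zero.mp (by simpa [hB] using hAB)
      simp [hA, hB, D]
    · have hfj : f j0 (∑ i ∈ B, εB i • e i) = εB j0 := by
        rw [map_sum, Finset.sum_eq_single j0]
        · rw [map_smul, hbi]; simp
        · intro i _ hne
          rw [map_smul, hbi, if_neg (fun h => hne h.symm)]; simp
        · intro h; exact absurd hj0 h
      have h1 : (1 : ℝ) ≤ α₂ * D := by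
        have hle := (f j0).le_opNorm (∑ i ∈ B, εB i • e i)
        rw [hfj, Real.norm_eq_abs, hεB j0 hj0] at hle
        have hop := hα₂ j0
        nlinarith
      have hup : ‖∑ i ∈ A, εA i • e i‖ ≤ α₁ * A.card := by
        calc ‖∑ i ∈ A, εA i • e i‖ ≤ ∑ i ∈ A, ‖εA i • e i‖ := norm_sum_le _ _
          _ ≤ ∑ _i ∈ A, α₁ := by
              refine Finset.sum_le_sum fun i hi => ?_
              rw [norm_smul, Real.norm_eq_abs, hεA i hi, one_mul]
              exact hα₁ i
          _ = α₁ * A.card := by rw [Finset.sum_const]; push_cast; ring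
      have hcard : (A.card : ℝ) ≤ (nseq 0 : ℝ) := by
        exact_mod_cast Nat.le_of_lt (Nat.lt_of_not_le hsmall)
      have hn0 : (0 : ℝ) < (nseq 0 : ℝ) := by exact_mod_cast hn1
      calc ‖∑ i ∈ A, εA i • e i‖ ≤ α₁ * A.card := hup
        _ ≤ α₁ * α₂ * (nseq 0 : ℝ) * D := by
            nlinarith [mul_le_mul_of_nonneg_left hcard hα₁pos.le,
              mul_le_mul_of_nonneg_left h1 (mul_nonneg hα₁pos.le hn0.le)]
        _ ≤ max (α₁ * α₂ * (nseq 0 : ℝ)) ((l : ℝ) * C) * D :=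
            mul_le_mul_of_nonneg_right (le_max_left _ _) hD0



/-- Suppose `𝐧` has `l`-bounded gaps and the basis is `Ku`-unconditional
for constant coefficients (no Schauder assumption). If it is `Δd`-`𝐧`-democratic, it is
superdemocratic with constant at most `max (α₁α₂n₁) (l Ku² Δd)`; if it is
`Δs`-`𝐧`-superdemocratic, it is superdemocratic with constant at most
`max (α₁α₂n₁) (l Ku Δs)`. -/
theorem stmt19
    {X : Type*} [NormedAddCommGroup X] [NormedSpace ℝ X]
    (e : ℕ → X) (f : ℕ → X →L[ℝ] ℝ)
    (hbi : ∀ i j, f i (e j) = if i = j then (1 : ℝ) else 0)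
    (α₁ α₂ : ℝ) (hα₁pos : 0 < α₁) (hα₂pos : 0 < α₂)
    (hα₁ : ∀ i, ‖e i‖ ≤ α₁) (hα₂ : ∀ i, ‖f i‖ ≤ α₂)
    (nseq : ℕ → ℕ) (hmono : StrictMono nseq) (hn1 : 0 < nseq 0)
    (l : ℕ) (hl : 2 ≤ l) (hgaps : ∀ k, nseq (k + 1) ≤ l * nseq k)
    (Ku : ℝ) (hKu : 0 < Ku)
    (hucc : ∀ (A : Finset ℕ) (ε ε' : ℕ → ℝ),
      (∀ i ∈ A, |ε i| = 1) → (∀ i ∈ A, |ε' i| = 1) →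
      ‖∑ i ∈ A, ε i • e i‖ ≤ Ku * ‖∑ i ∈ A, ε' i • e i‖)
    (Δd Δs : ℝ) (hΔd : 0 < Δd) (hΔs : 0 < Δs) :
    ((∀ (A B : Finset ℕ), A.card ≤ B.card →
        (∃ k, A.card = nseq k) → (∃ k, B.card = nseq k) →
        ‖∑ i ∈ A, e i‖ ≤ Δd * ‖∑ i ∈ B, e i‖) →
      ∀ (A B : Finset ℕ) (εA εB : ℕ → ℝ), A.card ≤ B.card →
        (∀ i ∈ A, |εA i| = 1) → (∀ i ∈ B, |εB i| = 1) →
        ‖∑ i ∈ A, εA i • e i‖ ≤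
          max (α₁ * α₂ * (nseq 0 : ℝ)) ((l : ℝ) * Ku ^ 2 * Δd) *
            ‖∑ i ∈ B, εB i • e i‖) ∧
    ((∀ (A B : Finset ℕ) (εA εB : ℕ → ℝ), A.card ≤ B.card →
        (∃ k, A.card = nseq k) → (∃ k, B.card = nseq k) →
        (∀ i ∈ A, |εA i| = 1) → (∀ i ∈ B, |εB i| = 1) →
        ‖∑ i ∈ A, εA i • e i‖ ≤ Δs * ‖∑ i ∈ B, εB i • e i‖) →
      ∀ (A B : Finset ℕ) (εA εB : ℕ → ℝ), A.card ≤ B.card →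
        (∀ i ∈ A, |εA i| = 1) → (∀ i ∈ B, |εB i| = 1) →
        ‖∑ i ∈ A, εA i • e i‖ ≤
          max (α₁ * α₂ * (nseq 0 : ℝ)) ((l : ℝ) * Ku * Δs) *
            ‖∑ i ∈ B, εB i • e i‖) := by
  constructor
  · intro hdem A B εA εB hAB hεA hεB
    have hkey : ∀ (k : ℕ) (T' : Finset ℕ) (η : ℕ → ℝ), T'.card = nseq k → nseq k ≤ B.card →
        (∀ i ∈ T', |η i| = 1) →
        ‖∑ i ∈ T', η i • e i‖ ≤ (Ku ^ 2 * Δd) * ‖∑ i ∈ B, εB i • e i‖ := by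
      intro k T' η hT'c hkB hη
      obtain ⟨B', hB'B, hB'c⟩ := Finset.exists_subset_card_eq hkB
      have s1 : ‖∑ i ∈ T', η i • e i‖ ≤ Ku * ‖∑ i ∈ T', e i‖ := by
        have := hucc T' η (fun _ => 1) hη (fun i _ => by norm_num)
        simpa using this
      have s2 : ‖∑ i ∈ T', e i‖ ≤ Δd * ‖∑ i ∈ B', e i‖ :=
        hdem T' B' (by rw [hT'c, hB'c]) ⟨k, hT'c⟩ ⟨k, hB'c⟩
      have s3 : ‖∑ i ∈ B', e i‖ ≤ Ku * ‖∑ i ∈ B, εB i • e i‖ := by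
        have heq : ∑ i ∈ B', e i = ∑ i ∈ B', (1 : ℝ) • e i := by simp
        rw [heq]
        exact aux_drop19 e B' B hB'B (fun _ => 1) (fun i _ => by norm_num) _
          (fun η' hη' => hucc B η' εB hη' hεB)
      calc ‖∑ i ∈ T', η i • e i‖ ≤ Ku * ‖∑ i ∈ T', e i‖ := s1
        _ ≤ Ku * (Δd * ‖∑ i ∈ B', e i‖) := mul_le_mul_of_nonneg_left s2 hKu.le
        _ ≤ Ku * (Δd * (Ku * ‖∑ i ∈ B, εB i • e i‖)) :=
            mul_le_mul_of_nonneg_left (mul_le_mul_of_nonneg_left s3 hΔd.le) hKu.le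
        _ = (Ku ^ 2 * Δd) * ‖∑ i ∈ B, εB i • e i‖ := by ring
    have hres := aux_master19 e f hbi α₁ α₂ hα₁pos hα₂pos hα₁ hα₂ nseq hmono hn1 l hgaps
      A B εA εB hAB hεA hεB (Ku ^ 2 * Δd) (by positivity) hkey
    have hmax : (l : ℝ) * (Ku ^ 2 * Δd) = (l : ℝ) * Ku ^ 2 * Δd := by ring
    rwa [hmax] at hres
  · intro hsup A B εA εB hAB hεA hεB
    have hkey : ∀ (k : ℕ) (T' : Finset ℕ) (η : ℕ → ℝ), T'.card = nseq k → nseq k ≤ B.card →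
        (∀ i ∈ T', |η i| = 1) →
        ‖∑ i ∈ T', η i • e i‖ ≤ (Ku * Δs) * ‖∑ i ∈ B, εB i • e i‖ := by
      intro k T' η hT'c hkB hη
      obtain ⟨B', hB'B, hB'c⟩ := Finset.exists_subset_card_eq hkB
      have s1 : ‖∑ i ∈ T', η i • e i‖ ≤ Δs * ‖∑ i ∈ B', εB i • e i‖ :=
        hsup T' B' η εB (by rw [hT'c, hB'c]) ⟨k, hT'c⟩ ⟨k, hB'c⟩ hη
          (fun i hi => hεB i (hB'B hi))
      have s2 : ‖∑ i ∈ B', εB i • e i‖ ≤ Ku * ‖∑ i ∈ B, εB i • e i‖ :=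
        aux_drop19 e B' B hB'B εB (fun i hi => hεB i (hB'B hi)) _
          (fun η' hη' => hucc B η' εB hη' hεB)
      calc ‖∑ i ∈ T', η i • e i‖ ≤ Δs * ‖∑ i ∈ B', εB i • e i‖ := s1
        _ ≤ Δs * (Ku * ‖∑ i ∈ B, εB i • e i‖) := mul_le_mul_of_nonneg_left s2 hΔs.le
        _ = (Ku * Δs) * ‖∑ i ∈ B, εB i • e i‖ := by ring
    have hres := aux_master19 e f hbi α₁ α₂ hα₁pos hα₂pos hα₁ hα₂ nseq hmono hn1 l hgaps
      A B εA εB hAB hεA hεB (Ku * Δs) (by positivity) hkey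
    have hmax : (l : ℝ) * (Ku * Δs) = (l : ℝ) * Ku * Δs := by ring
    rwa [hmax] at hres
end
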